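/- (Theorem 1 of the paper.) Let A be an adjacency matrix obtained from a γ-corrupt SBM with K communities (Ω_k), connectivity matrix Γ ∈ [0,1]^{K×K}, and inlier set F (meaning A_{F×F} agrees with a sample A₀ of the SBM restricted to F). Let S₁,…,S_K be nonempty disjoint subsets of {1,…,n} with union S, let Γ̂_{kl} be the empirical edge densities between S_k and S_l, and Q̂(S) = 𝐒 Γ̂ 𝐒ᵀ. Then ∑_{k=1}^K ∑_{l=k}^K |Γ_{kl} − Γ̂_{kl}| ≤ (K² / min_k |Ω_k ∩ S_k ∩ F|) · ( max_k Γ_{kk} + ‖A_F − 𝔼[A]_F‖ + ‖A_S − Q̂(S)‖ ). -/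

import Mathlib

/-!
Write `T_k = Ω_k ∩ S_k ∩ F`. On `T_k × T_l` the entries of `𝔼[A]` equal `Γ_{kl}` except on the
diagonal, and those of `Q̂(S)` equal `Γ̂_{kl}`, so summing over `T_k × T_l` gives
`|T_k| |T_l| (Γ_{kl} - Γ̂_{kl}) = ∑ (𝔼[A] - A) + ∑ (A - Q̂(S)) + |T_k ∩ T_l| Γ_{kk}`.
Pairing a matrix with the indicator vectors of `T_k` and `T_l` bounds each block sum by its
spectral norm times `√|T_k| √|T_l|`. As `|T_k|, |T_l| ≥ m`, every `|Γ_{kl} - Γ̂_{kl}|` is at most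
`(max_k Γ_{kk} + ‖A_F - 𝔼[A]_F‖ + ‖A_S - Q̂(S)‖) / m`, and there are at most `K²` pairs `k ≤ l`.
-/

open Matrix Finset

/-- Spectral (operator) norm of a real matrix, via its action on Euclidean space. -/
noncomputable def specNorm {m n : Type*} [Fintype m] [Fintype n] [DecidableEq n]
    (M : Matrix m n ℝ) : ℝ :=
  ‖LinearMap.toContinuousLinearMap (Matrix.toEuclideanLin M)‖

/-- Restriction of a matrix to the rows and columns indexed by a finset `S`. -/
def restrict {n : ℕ} (A : Matrix (Fin n) (Fin n) ℝ) (S : Finset (Fin n)) :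
    Matrix S S ℝ :=
  A.submatrix (↑·) (↑·)

/-- The `|S| × K` indicator matrix of the partition `(Sk k)` of `S`. -/
def indicatorMatrix {n K : ℕ} (Sk : Fin K → Finset (Fin n)) (S : Finset (Fin n)) :
    Matrix S (Fin K) ℝ :=
  fun i k => if (i : Fin n) ∈ Sk k then 1 else 0

/-- Empirical edge densities `Γ̂_{kl}` between the blocks `Sk k` and `Sk l`. -/
noncomputable def empDensity {n K : ℕ} (A : Matrix (Fin n) (Fin n) ℝ)
    (Sk : Fin K → Finset (Fin n)) : Matrix (Fin K) (Fin K) ℝ :=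
  fun k l => (∑ i ∈ Sk k, ∑ j ∈ Sk l, A i j) / (((Sk k).card : ℝ) * ((Sk l).card : ℝ))

/-- The block-constant estimate `Q̂(S) = 𝐒 Γ̂ 𝐒ᵀ` of the expected adjacency matrix on `S`. -/
noncomputable def Qhat {n K : ℕ} (A : Matrix (Fin n) (Fin n) ℝ)
    (Sk : Fin K → Finset (Fin n)) (S : Finset (Fin n)) : Matrix S S ℝ :=
  indicatorMatrix Sk S * empDensity A Sk * (indicatorMatrix Sk S)ᵀ

open Function

lemma abs_inner_toEuclideanLin_le {m n : Type*} [Fintype m] [Fintype n] [DecidableEq n]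
    (M : Matrix m n ℝ) (x : EuclideanSpace ℝ m) (y : EuclideanSpace ℝ n) :
    |inner ℝ x (toEuclideanLin M y)| ≤ specNorm M * ‖x‖ * ‖y‖ := by
  calc _ ≤ ‖x‖ * ‖LinearMap.toContinuousLinearMap (toEuclideanLin M) y‖ :=
        abs_real_inner_le_norm _ _
    _ ≤ ‖x‖ * (specNorm M * ‖y‖) := by gcongr; exact ContinuousLinearMap.le_opNorm _ _
    _ = _ := by ring

lemma norm_toLp_indicator_eq_sqrt_card {m : Type*} [Fintype m] (s : Finset m)
    [DecidablePred (· ∈ s)] :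
    ‖WithLp.toLp 2 fun i => if i ∈ s then (1 : ℝ) else 0‖ = √(#s : ℝ) := by
  simp [EuclideanSpace.norm_eq]

lemma abs_sum_block_le_specNorm {m n : Type*} [Fintype m] [Fintype n] [DecidableEq n]
    (M : Matrix m n ℝ) (s : Finset m) (t : Finset n) :
    |∑ i ∈ s, ∑ j ∈ t, M i j| ≤ specNorm M * √(#s : ℝ) * √(#t : ℝ) := by
  classical
  have key := abs_inner_toEuclideanLin_le M
    (WithLp.toLp 2 fun i => if i ∈ s then (1 : ℝ) else 0)
    (WithLp.toLp 2 fun j => if j ∈ t then (1 : ℝ) else 0)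
  rw [norm_toLp_indicator_eq_sqrt_card, norm_toLp_indicator_eq_sqrt_card] at key
  convert key using 2
  simp [PiLp.inner_apply, mulVec, dotProduct, sum_ite_mem]

lemma abs_sum_block_le_specNorm_of_subset {α : Type*} [DecidableEq α] {U s t : Finset α}
    (hs : s ⊆ U) (ht : t ⊆ U) (M : Matrix U U ℝ) (f : α → α → ℝ)
    (hf : ∀ i j : U, ↑i ∈ s → ↑j ∈ t → M i j = f i j) :
    |∑ i ∈ s, ∑ j ∈ t, f i j| ≤ specNorm M * √(#s : ℝ) * √(#t : ℝ) := by
  have key := abs_sum_block_le_specNorm M (s.subtype (· ∈ U)) (t.subtype (· ∈ U))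
  have hsU : s.filter (· ∈ U) = s := filter_true_of_mem hs
  have htU : t.filter (· ∈ U) = t := filter_true_of_mem ht
  rw [card_subtype, card_subtype, hsU, htU] at key
  calc |∑ i ∈ s, ∑ j ∈ t, f i j|
      = |∑ i ∈ s.subtype (· ∈ U), ∑ j ∈ t.subtype (· ∈ U), f i j| := by
        rw [sum_subtype_eq_sum_filter (fun i => ∑ j ∈ t.subtype (· ∈ U), f i j), hsU]
        simp only [sum_subtype_eq_sum_filter, htU]
    _ = |∑ i ∈ s.subtype (· ∈ U), ∑ j ∈ t.subtype (· ∈ U), M i j| := by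
        congr 1
        exact sum_congr rfl fun i hi => sum_congr rfl fun j hj =>
          (hf i j (mem_subtype.1 hi) (mem_subtype.1 hj)).symm
    _ ≤ _ := key

lemma indicatorMatrix_apply_of_mem {n K : ℕ} {Sk : Fin K → Finset (Fin n)}
    (hdisj : Pairwise (Disjoint on Sk)) {S : Finset (Fin n)} {i : S} {k : Fin K}
    (hi : ↑i ∈ Sk k) : indicatorMatrix Sk S i = Pi.single k 1 := by
  ext d
  by_cases hdk : d = k
  · subst hdk; simp [indicatorMatrix, hi]
  · simp [indicatorMatrix, hdk, Finset.disjoint_left.mp (hdisj (Ne.symm hdk)) hi]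

lemma Qhat_apply_of_mem {n K : ℕ} (A : Matrix (Fin n) (Fin n) ℝ) {Sk : Fin K → Finset (Fin n)}
    (hdisj : Pairwise (Disjoint on Sk)) {S : Finset (Fin n)} {i j : S} {k l : Fin K}
    (hi : ↑i ∈ Sk k) (hj : ↑j ∈ Sk l) : Qhat A Sk S i j = empDensity A Sk k l := by
  simp [Qhat, mul_apply, indicatorMatrix_apply_of_mem hdisj hi,
    indicatorMatrix_apply_of_mem hdisj hj, Pi.single_apply]

/-- `𝔼[A] = ZΓZᵀ - diag(ZΓZᵀ)`, where `Z` is the indicator matrix of the labelling `z`. -/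
def sbmMean {ι κ : Type*} [DecidableEq ι] (z : ι → κ) (Γ : Matrix κ κ ℝ) : Matrix ι ι ℝ :=
  of (fun i j => Γ (z i) (z j)) - diagonal (fun i => Γ (z i) (z i))

lemma sum_block_sbmMean {ι κ : Type*} [DecidableEq ι] (z : ι → κ) (Γ : Matrix κ κ ℝ)
    {s t : Finset ι} {k l : κ} (hs : ∀ i ∈ s, z i = k) (ht : ∀ j ∈ t, z j = l) :
    ∑ i ∈ s, ∑ j ∈ t, sbmMean z Γ i j = #s * #t * Γ k l - #(s ∩ t) * Γ k k := by
  have hentry : ∀ i ∈ s, ∀ j ∈ t, sbmMean z Γ i j = Γ k l - if i = j then Γ k k else 0 := by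
    intro i hi j hj
    simp [sbmMean, diagonal_apply, hs i hi, ht j hj]
  rw [sum_congr rfl fun i hi => sum_congr rfl (hentry i hi)]
  simp [sum_sub_distrib, sum_ite_eq, sum_ite_mem]
  ring

lemma natCast_card_inter_le_sqrt_mul_sqrt {α : Type*} [DecidableEq α] (s t : Finset α) :
    (#(s ∩ t) : ℝ) ≤ √(#s : ℝ) * √(#t : ℝ) := by
  rw [← Real.sqrt_mul (Nat.cast_nonneg _), Real.le_sqrt (Nat.cast_nonneg _) (by positivity), sq]
  exact_mod_cast Nat.mul_le_mul (card_le_card inter_subset_left) (card_le_card inter_subset_right)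

lemma card_mul_card_mul_abs_sub_empDensity_le {n K : ℕ} (z : Fin n → Fin K)
    (Γ : Matrix (Fin K) (Fin K) ℝ) (A : Matrix (Fin n) (Fin n) ℝ) {F S : Finset (Fin n)}
    {Sk : Fin K → Finset (Fin n)} (hdisj : Pairwise (Disjoint on Sk)) (hSkS : ∀ k, Sk k ⊆ S)
    {s t : Finset (Fin n)} {k l : Fin K} (hsF : s ⊆ F) (htF : t ⊆ F)
    (hsS : s ⊆ Sk k) (htS : t ⊆ Sk l) (hs : ∀ i ∈ s, z i = k) (ht : ∀ j ∈ t, z j = l)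
    (hΓ : 0 ≤ Γ k k) :
    (#s : ℝ) * #t * |Γ k l - empDensity A Sk k l|
      ≤ (Γ k k + specNorm (restrict (A - sbmMean z Γ) F) + specNorm (restrict A S - Qhat A Sk S))
        * √(#s : ℝ) * √(#t : ℝ) := by
  set G := empDensity A Sk k l
  have hsplit : (#s : ℝ) * #t * (Γ k l - G) = -(∑ i ∈ s, ∑ j ∈ t, (A - sbmMean z Γ) i j)
      + ∑ i ∈ s, ∑ j ∈ t, (A i j - G) + #(s ∩ t) * Γ k k := by
    simp only [Matrix.sub_apply, sum_sub_distrib, sum_block_sbmMean z Γ hs ht, sum_const,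
      nsmul_eq_mul]
    ring
  have hnoise := abs_sum_block_le_specNorm_of_subset hsF htF (restrict (A - sbmMean z Γ) F)
    (fun i j => (A - sbmMean z Γ) i j) fun _ _ _ _ => rfl
  have hfit := abs_sum_block_le_specNorm_of_subset (hsS.trans (hSkS k)) (htS.trans (hSkS l))
    (restrict A S - Qhat A Sk S) (fun i j => A i j - G) fun i j hi hj => by
      show A i j - Qhat A Sk S i j = A i j - G
      rw [Qhat_apply_of_mem A hdisj (hsS hi) (htS hj)]
  have hdiag : (#(s ∩ t) : ℝ) * Γ k k ≤ Γ k k * √(#s : ℝ) * √(#t : ℝ) := by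
    rw [mul_assoc, mul_comm (Γ k k)]
    exact mul_le_mul_of_nonneg_right (natCast_card_inter_le_sqrt_mul_sqrt s t) hΓ
  rw [← abs_of_nonneg (by positivity : (0 : ℝ) ≤ #s * #t), ← abs_mul, hsplit]
  calc _ ≤ |-(∑ i ∈ s, ∑ j ∈ t, (A - sbmMean z Γ) i j)| + |∑ i ∈ s, ∑ j ∈ t, (A i j - G)|
        + |(#(s ∩ t) : ℝ) * Γ k k| := abs_add_three _ _ _
    _ ≤ _ := by
      rw [abs_neg, abs_of_nonneg (mul_nonneg (Nat.cast_nonneg _) hΓ)]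
      linarith

lemma le_div_of_mul_mul_le_mul_sqrt_mul_sqrt {a b m x C : ℝ} (hm : 0 < m) (ha : m ≤ a)
    (hb : m ≤ b) (hC : 0 ≤ C) (h : a * b * x ≤ C * √a * √b) : x ≤ C / m := by
  have hr : m ≤ √a * √b := by
    calc m = √m * √m := (Real.mul_self_sqrt hm.le).symm
      _ ≤ √a * √b := by gcongr
  have hab : a * b = (√a * √b) * (√a * √b) := by
    rw [mul_mul_mul_comm, Real.mul_self_sqrt (hm.le.trans ha), Real.mul_self_sqrt (hm.le.trans hb)]
  rw [hab, mul_assoc C, mul_assoc, mul_comm C] at h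
  have hrx : √a * √b * x ≤ C := le_of_mul_le_mul_left h (hm.trans_le hr)
  rw [le_div_iff₀ hm]
  rcases le_or_gt 0 x with hx | hx <;> nlinarith

lemma sum_sum_Ici_le_sq_mul {K : ℕ} {f : Fin K → Fin K → ℝ} {c : ℝ} (hc : 0 ≤ c)
    (hf : ∀ k l, f k l ≤ c) : ∑ k, ∑ l ∈ Ici k, f k l ≤ K ^ 2 * c := by
  calc ∑ k, ∑ l ∈ Ici k, f k l ≤ ∑ k : Fin K, ∑ l ∈ Ici k, c :=
        sum_le_sum fun k _ => sum_le_sum fun l _ => hf k l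
    _ ≤ ∑ _k : Fin K, ∑ _l : Fin K, c :=
        sum_le_sum fun _ _ => sum_le_sum_of_subset_of_nonneg (subset_univ _) fun _ _ _ => hc
    _ = K ^ 2 * c := by simp only [sum_const, card_univ, Fintype.card_fin, nsmul_eq_mul]; ring

theorem stmt6_general {n K : ℕ} (hK : 0 < K)
    (z : Fin n → Fin K) (Γ : Matrix (Fin K) (Fin K) ℝ)
    (hΓrange : ∀ k l, Γ k l ∈ Set.Icc (0 : ℝ) 1)
    (A : Matrix (Fin n) (Fin n) ℝ)
    (EA : Matrix (Fin n) (Fin n) ℝ)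
    (hEA : EA = Matrix.of (fun i j => Γ (z i) (z j))
        - Matrix.diagonal (fun i => Γ (z i) (z i)))
    (F : Finset (Fin n))
    (Sk : Fin K → Finset (Fin n))
    (hdisj : ∀ k l, k ≠ l → Disjoint (Sk k) (Sk l))
    (S : Finset (Fin n)) (hS : S = Finset.univ.biUnion Sk)
    (m : ℕ)
    (hm : m = Finset.univ.inf' (Finset.univ_nonempty_iff.mpr ⟨⟨0, hK⟩⟩)
        (fun k => (((Finset.univ.filter (fun i => z i = k)) ∩ Sk k ∩ F).card)))
    (hm1 : 1 ≤ m) :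
    (∑ k : Fin K, ∑ l ∈ Finset.Ici k, |Γ k l - empDensity A Sk k l|)
      ≤ ((K : ℝ) ^ 2 / m)
        * ((Finset.univ.sup' (Finset.univ_nonempty_iff.mpr ⟨⟨0, hK⟩⟩) fun k => Γ k k)
            + specNorm (restrict (A - EA) F)
            + specNorm (restrict A S - Qhat A Sk S)) := by
  classical
  replace hEA : EA = sbmMean z Γ := hEA
  subst hEA hS
  set Γmax := univ.sup' (univ_nonempty_iff.mpr ⟨⟨0, hK⟩⟩) fun k => Γ k k
  set C := Γmax + specNorm (restrict (A - sbmMean z Γ) F)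
    + specNorm (restrict A (univ.biUnion Sk) - Qhat A Sk (univ.biUnion Sk))
  set T : Fin K → Finset (Fin n) := fun k => univ.filter (z · = k) ∩ Sk k ∩ F
  have hm0 : (0 : ℝ) < m := by exact_mod_cast hm1
  have hmT : ∀ k, (m : ℝ) ≤ #(T k) := fun k => by rw [hm]; exact_mod_cast inf'_le _ (mem_univ k)
  have hΓmax : ∀ k, Γ k k ≤ Γmax := fun k => le_sup' (fun k => Γ k k) (mem_univ k)
  have hC : 0 ≤ C := add_nonneg (add_nonneg ((hΓrange _ _).1.trans (hΓmax ⟨0, hK⟩))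
    (norm_nonneg _)) (norm_nonneg _)
  have hpair : ∀ k l, |Γ k l - empDensity A Sk k l| ≤ C / m := fun k l =>
    le_div_of_mul_mul_le_mul_sqrt_mul_sqrt hm0 (hmT k) (hmT l) hC <|
      (card_mul_card_mul_abs_sub_empDensity_le z Γ A (fun k l => hdisj k l)
        (fun k => subset_biUnion_of_mem Sk (mem_univ k)) inter_subset_right inter_subset_right
        (inter_subset_left.trans inter_subset_right) (inter_subset_left.trans inter_subset_right)
        (fun _ hi => by simp_all [T]) (fun _ hi => by simp_all [T]) (hΓrange k k).1).trans
      (by unfold C; gcongr; exact hΓmax k)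
  calc _ ≤ K ^ 2 * (C / m) := sum_sum_Ici_le_sq_mul (div_nonneg hC hm0.le) hpair
    _ = _ := by ring

/-- **Theorem 1.** For an adjacency matrix `A` from a `γ`-corrupt SBM with communities
`Ω_k = {i : z i = k}`, connectivity `Γ`, inlier set `F` (on which `A` agrees with the
uncorrupted sample `A₀`), and nonempty disjoint blocks `S₁,…,S_K` with union `S`,
`∑_{k≤l} |Γ_{kl} − Γ̂_{kl}|
  ≤ (K²/min_k |Ω_k∩S_k∩F|) (max_k Γ_{kk} + ‖A_F − 𝔼[A]_F‖ + ‖A_S − Q̂(S)‖)`. -/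
theorem stmt6 {n K : ℕ} (hK : 0 < K)
    (γ : ℝ) (hγ0 : 0 ≤ γ) (hγ : γ < 1 / 2)
    (z : Fin n → Fin K) (Γ : Matrix (Fin K) (Fin K) ℝ)
    (hΓsymm : Γ.IsSymm) (hΓrange : ∀ k l, Γ k l ∈ Set.Icc (0 : ℝ) 1)
    (A A₀ : Matrix (Fin n) (Fin n) ℝ) (hA : A.IsSymm) (hA₀ : A₀.IsSymm)
    (EA : Matrix (Fin n) (Fin n) ℝ)
    (hEA : EA = Matrix.of (fun i j => Γ (z i) (z j))
        - Matrix.diagonal (fun i => Γ (z i) (z i)))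
    (F : Finset (Fin n))
    (hcorrupt : (n : ℝ) - F.card ≤ γ * n)
    (hF : ∀ i ∈ F, ∀ j ∈ F, A i j = A₀ i j)
    (Sk : Fin K → Finset (Fin n)) (hSne : ∀ k, (Sk k).Nonempty)
    (hdisj : ∀ k l, k ≠ l → Disjoint (Sk k) (Sk l))
    (S : Finset (Fin n)) (hS : S = Finset.univ.biUnion Sk)
    (m : ℕ)
    (hm : m = Finset.univ.inf' (Finset.univ_nonempty_iff.mpr ⟨⟨0, hK⟩⟩)
        (fun k => (((Finset.univ.filter (fun i => z i = k)) ∩ Sk k ∩ F).card)))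
    (hm1 : 1 ≤ m) :
    (∑ k : Fin K, ∑ l ∈ Finset.Ici k, |Γ k l - empDensity A Sk k l|)
      ≤ ((K : ℝ) ^ 2 / m)
        * ((Finset.univ.sup' (Finset.univ_nonempty_iff.mpr ⟨⟨0, hK⟩⟩) fun k => Γ k k)
            + specNorm (restrict (A - EA) F)
            + specNorm (restrict A S - Qhat A Sk S)) :=
  stmt6_general hK z Γ hΓrange A EA hEA F Sk hdisj S hS m hm hm1
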